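/- arXiv:2403.08065 — 6 statements merged into one kernel-verified Lean document; each statement's English description precedes it below -/
import Mathlib

section
/- Let n, m be positive integers, let 𝐀 be a real n×n matrix, 𝐁 a real n×m matrix, 𝐗 a symmetric positive definite n×n matrix, and 𝐖 a symmetric positive definite m×m matrix. Then 𝐗 − 𝐀𝐗𝐀ᵀ − 𝐁𝐖𝐁ᵀ is positive definite if and only if the symmetric 3×3 block matrix [[𝐗, 𝐀𝐗, 𝐁], [𝐗𝐀ᵀ, 𝐗, 0], [𝐁ᵀ, 0, 𝐖⁻¹]] is positive definite. -/
/-!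
The lower-right block `D = diag(X, W⁻¹)` of the big matrix is positive definite with inverse
`diag(X⁻¹, W)`, and its Schur complement is `X - (A X) X⁻¹ (A X)ᵀ - B W Bᵀ = X - A X Aᵀ - B W Bᵀ`.
A Hermitian block matrix with positive definite corner `D` is positive definite iff its Schur
complement is: positive definiteness is positive semidefiniteness plus a nonzero determinant, and
both pass through the Schur complement (`Matrix.PosDef.fromBlocks₂₂`, `Matrix.det_fromBlocks₂₂`).
-/

open Matrix

namespace Matrix

variable {m n p α 𝕜 : Type*} [Fintype m] [Fintype n]

theorem fromCols_mul_fromBlocks_zero_zero_mul_conjTranspose [Semiring α] [StarRing α]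
    (P : Matrix p m α) (Q : Matrix p n α) (E : Matrix m m α) (F : Matrix n n α) :
    fromCols P Q * fromBlocks E 0 0 F * (fromCols P Q)ᴴ = P * E * Pᴴ + Q * F * Qᴴ := by
  rw [conjTranspose_fromCols_eq_fromRows_conjTranspose, fromCols_mul_fromBlocks,
    fromCols_mul_fromRows]
  simp

variable [DecidableEq m] [DecidableEq n]

theorem inv_fromBlocks_zero_zero_of_isUnit_iff [CommRing α] {A : Matrix m m α}
    {D : Matrix n n α} (hAD : IsUnit A ↔ IsUnit D) :
    (fromBlocks A 0 0 D)⁻¹ = fromBlocks A⁻¹ 0 0 D⁻¹ := by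
  simpa using inv_fromBlocks_zero₂₁_of_isUnit_iff A 0 D hAD

section RCLike

open scoped ComplexOrder

variable [RCLike 𝕜]

theorem posDef_fromBlocks₂₂_iff (A : Matrix m m 𝕜) (B : Matrix m n 𝕜) {D : Matrix n n 𝕜}
    (hD : D.PosDef) : (fromBlocks A B Bᴴ D).PosDef ↔ (A - B * D⁻¹ * Bᴴ).PosDef := by
  let := hD.isUnit.invertible
  have hdet : (fromBlocks A B Bᴴ D).det = D.det * (A - B * D⁻¹ * Bᴴ).det := by
    rw [det_fromBlocks₂₂, invOf_eq_nonsing_inv]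
  constructor
  · intro h
    rw [((PosDef.fromBlocks₂₂ A B hD).1 h.posSemidef).posDef_iff_det_ne_zero]
    exact right_ne_zero_of_mul (hdet ▸ h.det_pos.ne')
  · intro h
    rw [((PosDef.fromBlocks₂₂ A B hD).2 h.posSemidef).posDef_iff_det_ne_zero, hdet]
    exact mul_ne_zero hD.det_pos.ne' h.det_pos.ne'

theorem PosDef.fromBlocks_zero_zero {A : Matrix m m 𝕜} {D : Matrix n n 𝕜} (hA : A.PosDef)
    (hD : D.PosDef) : (fromBlocks A 0 0 D).PosDef := by
  simpa using (posDef_fromBlocks₂₂_iff A 0 hD).2 (by simpa using hA)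

end RCLike

end Matrix

theorem schur_closed_loop_covariance_general
    (n m : ℕ)
    (A X : Matrix (Fin n) (Fin n) ℝ) (B : Matrix (Fin n) (Fin m) ℝ)
    (W : Matrix (Fin m) (Fin m) ℝ)
    (hX : X.PosDef) (hW : W.PosDef) :
    (X - A * X * Aᵀ - B * W * Bᵀ).PosDef ↔
      (fromBlocks X (fromCols (A * X) B)
        (fromRows (X * Aᵀ) Bᵀ) (fromBlocks X 0 0 W⁻¹)).PosDef := by
  have hXt : Xᵀ = X := hX.1
  have hlower : fromRows (X * Aᵀ) Bᵀ = (fromCols (A * X) B)ᴴ := by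
    rw [conjTranspose_eq_transpose_of_trivial, transpose_fromCols, transpose_mul, hXt]
  have hinv : (fromBlocks X 0 0 W⁻¹)⁻¹ = fromBlocks X⁻¹ 0 0 W := by
    rw [inv_fromBlocks_zero_zero_of_isUnit_iff (by simp [hX.isUnit, hW.isUnit]),
      nonsing_inv_nonsing_inv _ hW.det_pos.ne'.isUnit]
  have hAX : A * X * X⁻¹ * (A * X)ᴴ = A * X * Aᵀ := by
    rw [mul_nonsing_inv_cancel_right _ _ hX.det_pos.ne'.isUnit,
      conjTranspose_eq_transpose_of_trivial, transpose_mul, hXt, Matrix.mul_assoc]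
  rw [hlower, posDef_fromBlocks₂₂_iff _ _ (PosDef.fromBlocks_zero_zero hX hW.inv), hinv,
    fromCols_mul_fromBlocks_zero_zero_mul_conjTranspose, hAX, sub_add_eq_sub_sub,
    conjTranspose_eq_transpose_of_trivial]

/-- Schur-complement reformulation of the closed-loop covariance condition
`A X Aᵀ + B W Bᵀ ≺ X` (Eq. (18) in the paper). -/
theorem schur_closed_loop_covariance
    (n m : ℕ) (hn : 0 < n) (hm : 0 < m)
    (A X : Matrix (Fin n) (Fin n) ℝ) (B : Matrix (Fin n) (Fin m) ℝ)
    (W : Matrix (Fin m) (Fin m) ℝ)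
    (hX : X.PosDef) (hW : W.PosDef) :
    (X - A * X * Aᵀ - B * W * Bᵀ).PosDef ↔
      (fromBlocks X (fromCols (A * X) B)
        (fromRows (X * Aᵀ) Bᵀ) (fromBlocks X 0 0 W⁻¹)).PosDef :=
  schur_closed_loop_covariance_general n m A X B W hX hW
end

section
/- Let n, m, p be positive integers. Let 𝐗 be a symmetric invertible 2n×2n real matrix with block form 𝐗 = [[X, Uᵀ], [U, X̂]] (n×n blocks) and inverse 𝐗⁻¹ = [[Y, S], [Sᵀ, Ŷ]] (n×n blocks), and let T = [[I, Y], [0, Sᵀ]]. Let A be n×n, B be n×m, C be p×n, A_c be n×n, B_c be n×p, C_c be m×n real matrices, and set 𝐀 = [[A, B·C_c], [B_c·C, A_c]] (2n×2n). Define L = C_c·U, F = S·B_c, and Q = Y·A·X + F·C·X + Y·B·L + S·A_c·U. Then Tᵀ 𝐀 𝐗 T = [[A·X + B·L, A], [Q, Y·A + F·C]]. Moreover, for any n×d matrix D, with 𝐁 the 2n×(d+m+p+p) block matrix [[D, B, 0, 0], [0, 0, B_c, B_c]], one has Tᵀ 𝐁 = [[D, B, 0, 0], [Y·D, Y·B,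 F, F]]. -/
/-!
The second block column of `T` is the first block column of `𝐗⁻¹`, so `𝐗 T = [[X, I], [U, 0]]`;
and `Y` is symmetric, being a diagonal block of the inverse of a symmetric matrix, so
`Tᵀ = [[I, 0], [Y, S]]`. Both identities then reduce to multiplying out block matrices.
-/

open Matrix

namespace Matrix

theorem fromBlocks_mul_fromBlocks_one_zero_of_mul_eq_one {α l n o k : Type*} [Semiring α]
    [Fintype n] [Fintype k] [DecidableEq l] [DecidableEq n] [DecidableEq o]
    {P : Matrix l n α} {Q : Matrix l k α} {R : Matrix o n α} {W : Matrix o k α} {Y : Matrix n l α} {S : Matrix n o α}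
    {S' : Matrix k l α} {Yhat : Matrix k o α}
    (h : fromBlocks P Q R W * fromBlocks Y S S' Yhat = 1) :
    fromBlocks P Q R W * fromBlocks (1 : Matrix n n α) Y 0 S' = fromBlocks P 1 R 0 := by
  rw [fromBlocks_multiply, ← fromBlocks_one] at *
  obtain ⟨h₁₁, -, h₂₁, -⟩ := fromBlocks_inj.1 h
  simp [h₁₁, h₂₁]

end Matrix

theorem change_of_variables_controller_general
    (n m p d : ℕ)
    (X U Xhat Y S Yhat : Matrix (Fin n) (Fin n) ℝ)
    (hsymm : (fromBlocks X Uᵀ U Xhat).IsHermitian)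
    (hmul₁ : fromBlocks X Uᵀ U Xhat * fromBlocks Y S Sᵀ Yhat = 1)
    (A : Matrix (Fin n) (Fin n) ℝ) (B : Matrix (Fin n) (Fin m) ℝ)
    (C : Matrix (Fin p) (Fin n) ℝ)
    (Ac : Matrix (Fin n) (Fin n) ℝ) (Bc : Matrix (Fin n) (Fin p) ℝ)
    (Cc : Matrix (Fin m) (Fin n) ℝ)
    (L : Matrix (Fin m) (Fin n) ℝ) (F : Matrix (Fin n) (Fin p) ℝ)
    (Q : Matrix (Fin n) (Fin n) ℝ)
    (hL : L = Cc * U) (hF : F = S * Bc)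
    (hQ : Q = Y * A * X + F * C * X + Y * B * L + S * Ac * U)
    (D : Matrix (Fin n) (Fin d) ℝ) :
    (fromBlocks 1 Y 0 Sᵀ)ᵀ * (fromBlocks A (B * Cc) (Bc * C) Ac)
        * (fromBlocks X Uᵀ U Xhat) * fromBlocks 1 Y 0 Sᵀ
      = fromBlocks (A * X + B * L) A Q (Y * A + F * C)
    ∧
    (fromBlocks 1 Y 0 Sᵀ)ᵀ
        * (fromBlocks (fromCols D B) 0 0 (fromCols Bc Bc) :
            Matrix (Fin n ⊕ Fin n) ((Fin d ⊕ Fin m) ⊕ (Fin p ⊕ Fin p)) ℝ)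
      = fromBlocks (fromCols D B) 0
          (fromCols (Y * D) (Y * B)) (fromCols F F) := by
  have hinv_symm : (fromBlocks Y S Sᵀ Yhat).IsSymm :=
    inv_eq_right_inv hmul₁ ▸ (isHermitian_iff_isSymm.1 hsymm).inv
  have hY : Yᵀ = Y := (isSymm_fromBlocks_iff.1 hinv_symm).1.eq
  have hT : (fromBlocks 1 Y 0 Sᵀ)ᵀ = fromBlocks (1 : Matrix (Fin n) (Fin n) ℝ) 0 Y S := by
    simp [fromBlocks_transpose, hY]
  have hXT := fromBlocks_mul_fromBlocks_one_zero_of_mul_eq_one hmul₁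
  refine ⟨?_, ?_⟩
  · rw [Matrix.mul_assoc _ (fromBlocks X Uᵀ U Xhat), hXT, hT]
    simp only [fromBlocks_multiply, Matrix.one_mul, Matrix.zero_mul, Matrix.mul_one, Matrix.mul_zero,
      add_zero, Matrix.add_mul, Matrix.mul_assoc, hL, hQ, hF]
    congr 1
    abel
  · rw [hT, fromBlocks_multiply]
    simp [mul_fromCols, hF]

/-- The change-of-variables computation in the proof of Theorem 1: expanding the
congruence-transformed closed-loop stability inequality produces the blocks
`A·X + B·L`, `Q`, `Y·A + F·C`, `Y·D`, `Y·B`, `F` appearing in the LMI (10), under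
the substitutions `L = C_c·U`, `F = S·B_c`,
`Q = Y·A·X + F·C·X + Y·B·L + S·A_c·U` (dynamic controller with `D_c = 0`). -/
theorem change_of_variables_controller
    (n m p d : ℕ) (hn : 0 < n) (hm : 0 < m) (hp : 0 < p) (hd : 0 < d)
    (X U Xhat Y S Yhat : Matrix (Fin n) (Fin n) ℝ)
    (hsymm : (fromBlocks X Uᵀ U Xhat).IsHermitian)
    (hmul₁ : fromBlocks X Uᵀ U Xhat * fromBlocks Y S Sᵀ Yhat = 1)
    (hmul₂ : fromBlocks Y S Sᵀ Yhat * fromBlocks X Uᵀ U Xhat = 1)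
    (A : Matrix (Fin n) (Fin n) ℝ) (B : Matrix (Fin n) (Fin m) ℝ)
    (C : Matrix (Fin p) (Fin n) ℝ)
    (Ac : Matrix (Fin n) (Fin n) ℝ) (Bc : Matrix (Fin n) (Fin p) ℝ)
    (Cc : Matrix (Fin m) (Fin n) ℝ)
    (L : Matrix (Fin m) (Fin n) ℝ) (F : Matrix (Fin n) (Fin p) ℝ)
    (Q : Matrix (Fin n) (Fin n) ℝ)
    (hL : L = Cc * U) (hF : F = S * Bc)
    (hQ : Q = Y * A * X + F * C * X + Y * B * L + S * Ac * U)
    (D : Matrix (Fin n) (Fin d) ℝ) :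
    (fromBlocks 1 Y 0 Sᵀ)ᵀ * (fromBlocks A (B * Cc) (Bc * C) Ac)
        * (fromBlocks X Uᵀ U Xhat) * fromBlocks 1 Y 0 Sᵀ
      = fromBlocks (A * X + B * L) A Q (Y * A + F * C)
    ∧
    (fromBlocks 1 Y 0 Sᵀ)ᵀ
        * (fromBlocks (fromCols D B) 0 0 (fromCols Bc Bc) :
            Matrix (Fin n ⊕ Fin n) ((Fin d ⊕ Fin m) ⊕ (Fin p ⊕ Fin p)) ℝ)
      = fromBlocks (fromCols D B) 0
          (fromCols (Y * D) (Y * B)) (fromCols F F) :=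
  change_of_variables_controller_general n m p d X U Xhat Y S Yhat hsymm hmul₁ A B C Ac Bc Cc L F Q
    hL hF hQ D
end

section
/- Let n, p be positive integers. Let 𝐗̂ be a symmetric invertible 2n×2n real matrix with block form 𝐗̂ = [[X̂, Ûᵀ], [Û, X̂₂₂]] (n×n blocks) and inverse 𝐗̂⁻¹ = [[Ŷ, Ŝ], [Ŝᵀ, Ŷ₂₂]], and let T̂ = [[I, Ŷ], [0, Ŝᵀ]]. Let A be n×n, C be p×n, Â be n×n, B̂ be n×p real matrices, and set 𝐀̂ = [[A, 0], [B̂·C, Â]] (2n×2n) and 𝐂̂ = [I, −I] (n×2n). Define F̂ = Ŝ·B̂ and Q̂ = Ŷ·A·X̂ + F̂·C·X̂ + Ŝ·Â·Û. Then T̂ᵀ 𝐀̂ 𝐗̂ T̂ = [[A·X̂, A], [Q̂, Ŷ·A + F̂·C]] and 𝐂̂ 𝐗̂ T̂ = [X̂ − Û, I]. -/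
open Matrix

/-!
The first block column of `𝐗̂ 𝐗̂⁻¹ = I` says exactly that `𝐗̂ T̂ = [[X̂, I], [Û, 0]]`.
Both identities follow by multiplying this out; the first also uses that `Ŷ`, a diagonal
block of the inverse of a symmetric matrix, is symmetric.
-/

variable {R : Type*} {l m n : Type*}

theorem fromBlocks_mul_fromBlocks_eq_one_iff [Ring R] [Fintype l] [Fintype m]
    [DecidableEq l] [DecidableEq m]
    {A : Matrix l l R} {B : Matrix l m R} {C : Matrix m l R} {D : Matrix m m R}
    {A' : Matrix l l R} {B' : Matrix l m R} {C' : Matrix m l R} {D' : Matrix m m R} :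
    fromBlocks A B C D * fromBlocks A' B' C' D' = 1 ↔
      A * A' + B * C' = 1 ∧ A * B' + B * D' = 0 ∧ C * A' + D * C' = 0 ∧ C * B' + D * D' = 1 := by
  rw [← fromBlocks_one, fromBlocks_multiply, fromBlocks_inj]

theorem fromBlocks_mul_fromBlocks_one_eq_of_mul_eq_one [Ring R] [Fintype n] [Fintype m]
    [DecidableEq n] [DecidableEq m]
    {X : Matrix n n R} {V : Matrix n m R} {U : Matrix m n R} {X₂₂ : Matrix m m R}
    {Y : Matrix n n R} {S : Matrix n m R} {W : Matrix m n R} {Y₂₂ : Matrix m m R}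
    (h : fromBlocks X V U X₂₂ * fromBlocks Y S W Y₂₂ = 1) :
    fromBlocks X V U X₂₂ * fromBlocks 1 Y 0 W = fromBlocks X 1 U 0 := by
  obtain ⟨h₁₁, -, h₂₁, -⟩ := fromBlocks_mul_fromBlocks_eq_one_iff.mp h
  simp only [fromBlocks_multiply, h₁₁, h₂₁, Matrix.mul_one, Matrix.mul_zero, add_zero]

theorem transpose_fromBlocks_mul_fromBlocks_mul_fromBlocks [Semiring R] [Fintype n] [Fintype m]
    [DecidableEq n] (Y : Matrix n n R) (W : Matrix m n R) (A : Matrix n n R)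
    (E : Matrix m n R) (Â : Matrix m m R) (X : Matrix n n R) (U : Matrix m n R) :
    (fromBlocks 1 Y 0 W)ᵀ * fromBlocks A 0 E Â * fromBlocks X 1 U 0
      = fromBlocks (A * X) A ((Yᵀ * A + Wᵀ * E) * X + Wᵀ * Â * U) (Yᵀ * A + Wᵀ * E) := by
  simp only [fromBlocks_transpose, transpose_one, transpose_zero, fromBlocks_multiply,
    Matrix.one_mul, Matrix.zero_mul, Matrix.mul_one, Matrix.mul_zero, add_zero, zero_add]

theorem change_of_variables_estimator_general
    (n p : ℕ)
    (Xhat Uhat Xhat22 Yhat Shat Yhat22 : Matrix (Fin n) (Fin n) ℝ)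
    (hsymm : (fromBlocks Xhat Uhatᵀ Uhat Xhat22).IsHermitian)
    (hmul₁ : fromBlocks Xhat Uhatᵀ Uhat Xhat22
        * fromBlocks Yhat Shat Shatᵀ Yhat22 = 1)
    (A : Matrix (Fin n) (Fin n) ℝ) (C : Matrix (Fin p) (Fin n) ℝ)
    (Ahat : Matrix (Fin n) (Fin n) ℝ) (Bhat : Matrix (Fin n) (Fin p) ℝ)
    (Fhat : Matrix (Fin n) (Fin p) ℝ) (Qhat : Matrix (Fin n) (Fin n) ℝ)
    (hFhat : Fhat = Shat * Bhat)
    (hQhat : Qhat = Yhat * A * Xhat + Fhat * C * Xhat + Shat * Ahat * Uhat) :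
    (fromBlocks 1 Yhat 0 Shatᵀ)ᵀ * (fromBlocks A 0 (Bhat * C) Ahat)
        * (fromBlocks Xhat Uhatᵀ Uhat Xhat22) * fromBlocks 1 Yhat 0 Shatᵀ
      = fromBlocks (A * Xhat) A Qhat (Yhat * A + Fhat * C)
    ∧
    (fromCols 1 (-1) : Matrix (Fin n) (Fin n ⊕ Fin n) ℝ)
        * (fromBlocks Xhat Uhatᵀ Uhat Xhat22) * fromBlocks 1 Yhat 0 Shatᵀ
      = fromCols (Xhat - Uhat) 1 := by
  have hXT := fromBlocks_mul_fromBlocks_one_eq_of_mul_eq_one hmul₁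
  have hY : Yhatᵀ = Yhat := by
    have hinv : (fromBlocks Yhat Shat Shatᵀ Yhat22).IsHermitian :=
      inv_eq_right_inv hmul₁ ▸ hsymm.inv
    rw [← conjTranspose_eq_transpose_of_trivial]
    exact (isHermitian_fromBlocks_iff.mp hinv).1
  constructor
  · rw [Matrix.mul_assoc _ (fromBlocks Xhat _ _ _), hXT,
      transpose_fromBlocks_mul_fromBlocks_mul_fromBlocks, hY, hQhat, hFhat]
    simp only [transpose_transpose, Matrix.add_mul, Matrix.mul_assoc]
  · rw [Matrix.mul_assoc, hXT, fromCols_mul_fromBlocks]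
    simp only [Matrix.one_mul, Matrix.mul_one, neg_one_mul, neg_zero, add_zero, sub_eq_add_neg]

/-- The change-of-variables computation in the proof of Theorem 1 for the
estimator part: the substitutions `F̂ = Ŝ·B̂`, `Q̂ = Ŷ·A·X̂ + F̂·C·X̂ + Ŝ·Â·Û`
produce the blocks of the LMIs (12)–(13). -/
theorem change_of_variables_estimator
    (n p : ℕ) (hn : 0 < n) (hp : 0 < p)
    (Xhat Uhat Xhat22 Yhat Shat Yhat22 : Matrix (Fin n) (Fin n) ℝ)
    (hsymm : (fromBlocks Xhat Uhatᵀ Uhat Xhat22).IsHermitian)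
    (hmul₁ : fromBlocks Xhat Uhatᵀ Uhat Xhat22
        * fromBlocks Yhat Shat Shatᵀ Yhat22 = 1)
    (hmul₂ : fromBlocks Yhat Shat Shatᵀ Yhat22
        * fromBlocks Xhat Uhatᵀ Uhat Xhat22 = 1)
    (A : Matrix (Fin n) (Fin n) ℝ) (C : Matrix (Fin p) (Fin n) ℝ)
    (Ahat : Matrix (Fin n) (Fin n) ℝ) (Bhat : Matrix (Fin n) (Fin p) ℝ)
    (Fhat : Matrix (Fin n) (Fin p) ℝ) (Qhat : Matrix (Fin n) (Fin n) ℝ)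
    (hFhat : Fhat = Shat * Bhat)
    (hQhat : Qhat = Yhat * A * Xhat + Fhat * C * Xhat + Shat * Ahat * Uhat) :
    (fromBlocks 1 Yhat 0 Shatᵀ)ᵀ * (fromBlocks A 0 (Bhat * C) Ahat)
        * (fromBlocks Xhat Uhatᵀ Uhat Xhat22) * fromBlocks 1 Yhat 0 Shatᵀ
      = fromBlocks (A * Xhat) A Qhat (Yhat * A + Fhat * C)
    ∧
    (fromCols 1 (-1) : Matrix (Fin n) (Fin n ⊕ Fin n) ℝ)
        * (fromBlocks Xhat Uhatᵀ Uhat Xhat22) * fromBlocks 1 Yhat 0 Shatᵀ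
      = fromCols (Xhat - Uhat) 1 :=
  change_of_variables_estimator_general n p Xhat Uhat Xhat22 Yhat Shat Yhat22 hsymm hmul₁ A C Ahat
    Bhat Fhat Qhat hFhat hQhat
end

section
/- Let n, m, p, q, d be positive integers. Let A (n×n), B (n×m), C (p×n), C_z (q×n), D (n×d) be real matrices; let W (d×d), V (p×p), Γ_w (m×m), Γ_v (p×p) be symmetric positive definite matrices, Z̄ a symmetric q×q matrix, X and Y symmetric n×n matrices, L an m×n matrix, F an n×p matrix, and Q an n×n matrix. Assume: (i) the symmetric 8×8 block matrix with upper-triangular blocks given by row 1: [X, I, AX + BL, A, D, B, 0, 0], row 2: [Y, Q, YA + FC, YD, YB, F, F], row 3: [X, I, 0, 0, 0, 0], row 4: [Y, 0, 0, 0, 0], row 5: [W⁻¹, 0, 0, 0], row 6: [Γ_w, 0, 0], row 7: [V⁻¹, 0], row 8: [Γ_v] is positive definite; and (ii) the block matrix [[Z̄, C_z·X, C_z], [X·C_zᵀ, X, I], [C_zᵀ, I, Y]] is positive definite. Then Y and U := Y⁻¹ − X are invertible, and defining B_c = Y⁻¹·F, C_c = L·U⁻¹, A_c = Y⁻¹·(Q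 − Y·A·X − F·C·X − Y·B·L)·U⁻¹, and the closed-loop matrices 𝐀 = [[A, B·C_c], [B_c·C, A_c]] (2n×2n), 𝐁 = [[D, B, 0, 0], [0, 0, B_c, B_c]] (2n×(d+m+p+p)), 𝐂 = [C_z, 0] (q×2n), 𝐖 = blockdiag(W, Γ_w⁻¹, V, Γ_v⁻¹), there exists a symmetric positive definite 2n×2n matrix 𝐗 such that 𝐗 − 𝐀𝐗𝐀ᵀ − 𝐁𝐖𝐁ᵀ is positive definite and Z̄ − 𝐂𝐗𝐂ᵀ is positive definite. -/
/-!
With `Π₁ = [[X, I], [U, 0]]`, `Π₂ = [[I, Y], [0, Y]]` and `R = [[X, I], [I, Y]]` one has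
`Π₂ᴴ Π₁ = R`, and the covariance bound is `𝐗 = Π₁ R⁻¹ Π₁ᴴ`, so that `Π₂ᴴ 𝐗 Π₂ = R`.
The congruence by the invertible matrix `Π₂` turns `𝐗 - 𝐀𝐗𝐀ᴴ - 𝐁𝐖𝐁ᴴ` into
`R - (Π₂ᴴ𝐁) 𝐖 (Π₂ᴴ𝐁)ᴴ - (Π₂ᴴ𝐀Π₁) R⁻¹ (Π₂ᴴ𝐀Π₁)ᴴ`, and the controller reconstruction is exactly
what makes `Π₂ᴴ𝐀Π₁` and `Π₂ᴴ𝐁` the (affine) blocks appearing in LMI (10); two Schur complements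
of (10) then give the Lyapunov inequality. Likewise `𝐂Π₁ = [C_z X, C_z]`, so the performance
bound is the Schur complement of (11).
-/

open Matrix
open scoped ComplexOrder

namespace Matrix

variable {α 𝕜 : Type*} [CommRing α] [RCLike 𝕜] {l m n : Type*}

theorem PosDef.of_fromBlocks₁₁ {A : Matrix m m 𝕜} {B : Matrix m n 𝕜} {C : Matrix n m 𝕜}
    {D : Matrix n n 𝕜} (h : (fromBlocks A B C D).PosDef) : A.PosDef :=
  h.submatrix Sum.inl_injective

theorem PosDef.of_fromBlocks₂₂ {A : Matrix m m 𝕜} {B : Matrix m n 𝕜} {C : Matrix n m 𝕜}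
    {D : Matrix n n 𝕜} (h : (fromBlocks A B C D).PosDef) : D.PosDef :=
  h.submatrix Sum.inr_injective

variable [Fintype l] [Fintype m] [Fintype n] [DecidableEq m] [DecidableEq n]

theorem PosDef.schur₂₂ {A : Matrix m m 𝕜} {B : Matrix m n 𝕜} {D : Matrix n n 𝕜}
    (h : (fromBlocks A B Bᴴ D).PosDef) : (A - B * D⁻¹ * Bᴴ).PosDef := by
  have hD := h.of_fromBlocks₂₂
  let _ := hD.isUnit.invertible
  refine ((PosDef.fromBlocks₂₂ A B hD).mp h.posSemidef).posDef_iff_isUnit.mpr ?_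
  have hdet := (isUnit_iff_isUnit_det _).mp h.isUnit
  rw [det_fromBlocks₂₂, invOf_eq_nonsing_inv] at hdet
  exact (isUnit_iff_isUnit_det _).mpr (isUnit_of_mul_isUnit_right hdet)

theorem PosDef.schur₂₂_of_fromRows_zero [DecidableEq l] {A : Matrix m m 𝕜} {B : Matrix m n 𝕜}
    {D : Matrix n n 𝕜} {E : Matrix m l 𝕜} {P : Matrix l l 𝕜}
    (h : (fromBlocks (fromBlocks A B Bᴴ D) (fromRows E 0) (fromRows E 0)ᴴ P).PosDef) :
    (A - E * P⁻¹ * Eᴴ - B * D⁻¹ * Bᴴ).PosDef := by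
  have hOuter : fromBlocks A B Bᴴ D - fromRows E 0 * P⁻¹ * (fromRows E 0)ᴴ
      = fromBlocks (A - E * P⁻¹ * Eᴴ) B Bᴴ D := by
    rw [conjTranspose_fromRows_eq_fromCols_conjTranspose, fromRows_mul, fromRows_mul_fromCols,
      sub_eq_add_neg, fromBlocks_neg, fromBlocks_add]
    simp [sub_eq_add_neg]
  exact (hOuter ▸ h.schur₂₂).schur₂₂

theorem PosDef.isUnit_inv_sub {X Y : Matrix n n 𝕜} (h : (fromBlocks X 1 1 Y).PosDef) :
    IsUnit (Y⁻¹ - X) := by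
  have h' : (fromBlocks X 1 (1 : Matrix n n 𝕜)ᴴ Y).PosDef := by rwa [conjTranspose_one]
  have hSchur : (X - 1 * Y⁻¹ * 1ᴴ).PosDef := h'.schur₂₂
  rw [← neg_sub]
  simpa using hSchur.isUnit.neg

theorem inv_fromBlocks_zero_zero {A : Matrix m m α} {D : Matrix n n α} (hA : IsUnit A)
    (hD : IsUnit D) : (fromBlocks A 0 0 D)⁻¹ = fromBlocks A⁻¹ 0 0 D⁻¹ := by
  simpa using inv_fromBlocks_zero₂₁_of_isUnit_iff A 0 D (iff_of_true hA hD)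

theorem conjTranspose_mul_lyapunov_mul [StarRing α] {P₁ P₂ R : Matrix n n α}
    (hP : P₂ᴴ * P₁ = R) (hR : R.IsHermitian) (hRu : IsUnit R)
    (A : Matrix n n α) (B : Matrix n l α) (W : Matrix l l α) :
    P₂ᴴ * (P₁ * R⁻¹ * P₁ᴴ - A * (P₁ * R⁻¹ * P₁ᴴ) * Aᴴ - B * W * Bᴴ) * P₂
      = R - (P₂ᴴ * B) * W * (P₂ᴴ * B)ᴴ - (P₂ᴴ * A * P₁) * R⁻¹ * (P₂ᴴ * A * P₁)ᴴ := by
  have hP' : P₁ᴴ * P₂ = R := by rw [← hR.eq, ← hP, conjTranspose_mul, conjTranspose_conjTranspose]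
  have hX : P₂ᴴ * (P₁ * R⁻¹ * P₁ᴴ) * P₂ = R := by
    simp only [Matrix.mul_assoc]
    rw [hP', nonsing_inv_mul _ ((isUnit_iff_isUnit_det R).mp hRu), Matrix.mul_one, hP]
  rw [Matrix.mul_sub, Matrix.mul_sub, Matrix.sub_mul, Matrix.sub_mul, hX]
  simp only [conjTranspose_mul, conjTranspose_conjTranspose, Matrix.mul_assoc]
  abel

variable {P₁ P₂ R : Matrix n n 𝕜}

theorem PosDef.mul_inv_mul_conjTranspose (hP : P₂ᴴ * P₁ = R) (hR : R.PosDef) :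
    (P₁ * R⁻¹ * P₁ᴴ).PosDef := by
  have hdet : IsUnit (P₂ᴴ.det * P₁.det) := by
    rw [← det_mul, hP, ← isUnit_iff_isUnit_det]; exact hR.isUnit
  have hP₁ : IsUnit P₁ := (isUnit_iff_isUnit_det _).mpr (isUnit_of_mul_isUnit_right hdet)
  exact hP₁.posDef_star_right_conjugate_iff.mpr hR.inv

theorem PosDef.lyapunov_of_congruence (hP₂ : IsUnit P₂) (hP : P₂ᴴ * P₁ = R) (hR : R.PosDef)
    {A G : Matrix n n 𝕜} {B E : Matrix n l 𝕜} {W : Matrix l l 𝕜}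
    (hG : P₂ᴴ * A * P₁ = G) (hE : P₂ᴴ * B = E) (h : (R - E * W * Eᴴ - G * R⁻¹ * Gᴴ).PosDef) :
    (P₁ * R⁻¹ * P₁ᴴ - A * (P₁ * R⁻¹ * P₁ᴴ) * Aᴴ - B * W * Bᴴ).PosDef := by
  subst hG hE
  rw [← conjTranspose_mul_lyapunov_mul hP hR.isHermitian hR.isUnit] at h
  exact hP₂.posDef_star_left_conjugate_iff.mp h

theorem PosDef.sub_mul_conj_of_fromBlocks {Z : Matrix m m 𝕜} {K : Matrix m n 𝕜}
    (h : (fromBlocks Z (K * P₁) (K * P₁)ᴴ R).PosDef) :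
    (Z - K * (P₁ * R⁻¹ * P₁ᴴ) * Kᴴ).PosDef := by
  simpa only [conjTranspose_mul, Matrix.mul_assoc] using h.schur₂₂

end Matrix

namespace ControllerSynthesis

variable {α : Type*} [CommRing α] {n m p d : Type*} [Fintype n] [DecidableEq n]
  {A X Y U Q Ac : Matrix n n α} {B : Matrix n m α} {C : Matrix p n α} {D : Matrix n d α}
  {L Cc : Matrix m n α} {F Bc : Matrix n p α}

theorem reconstruction_identities [Fintype m] [Fintype p] (hY : IsUnit Y) (hUu : IsUnit U)
    (hU : U = Y⁻¹ - X) (hBc : Bc = Y⁻¹ * F) (hCc : Cc = L * U⁻¹)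
    (hAc : Ac = Y⁻¹ * (Q - Y * A * X - F * C * X - Y * B * L) * U⁻¹) :
    Y * (X + U) = 1 ∧ Cc * U = L ∧ Y * Bc = F ∧
      Y * Ac * U = Q - Y * A * X - F * C * X - Y * B * L := by
  have hYY : Y * Y⁻¹ = 1 := mul_nonsing_inv _ ((isUnit_iff_isUnit_det Y).mp hY)
  have hUU : U⁻¹ * U = 1 := nonsing_inv_mul _ ((isUnit_iff_isUnit_det U).mp hUu)
  refine ⟨by rw [hU, add_sub_cancel, hYY], ?_, ?_, ?_⟩
  · rw [hCc, Matrix.mul_assoc, hUU, Matrix.mul_one]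
  · rw [hBc, ← Matrix.mul_assoc, hYY, Matrix.one_mul]
  · rw [hAc, ← Matrix.mul_assoc, ← Matrix.mul_assoc, hYY, Matrix.one_mul, Matrix.mul_assoc, hUU,
      Matrix.mul_one]

variable [StarRing α]

theorem transform_coupling (hY : Yᴴ = Y) (hXU : Y * (X + U) = 1) :
    (fromBlocks 1 Y 0 Y)ᴴ * fromBlocks X 1 U 0 = fromBlocks X 1 1 Y := by
  rw [fromBlocks_conjTranspose, fromBlocks_multiply]
  simp [hY, ← Matrix.mul_add, hXU]

theorem transform_inputMatrix (hY : Yᴴ = Y) (hBc : Y * Bc = F) :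
    (fromBlocks 1 Y 0 Y)ᴴ * fromBlocks (fromCols D B) 0 0 (fromCols Bc Bc)
      = fromCols (fromBlocks D B (Y * D) (Y * B)) (fromBlocks 0 0 F F) := by
  rw [fromBlocks_conjTranspose, fromBlocks_multiply]
  ext (i | i) ((j | j) | (j | j)) <;> simp [hY, ← hBc, Matrix.mul_apply]

theorem transform_stateMatrix [Fintype m] [Fintype p] (hY : Yᴴ = Y) (hCc : Cc * U = L)
    (hBc : Y * Bc = F) (hAc : Y * Ac * U = Q - Y * A * X - F * C * X - Y * B * L) :
    (fromBlocks 1 Y 0 Y)ᴴ * fromBlocks A (B * Cc) (Bc * C) Ac * fromBlocks X 1 U 0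
      = fromBlocks (A * X + B * L) A Q (Y * A + F * C) := by
  subst hCc hBc
  obtain rfl : Q = Y * Ac * U + Y * A * X + Y * Bc * C * X + Y * B * (Cc * U) := by
    rw [hAc]; abel
  rw [fromBlocks_conjTranspose, fromBlocks_multiply, fromBlocks_multiply]
  simp only [hY, conjTranspose_one, conjTranspose_zero, Matrix.one_mul, Matrix.zero_mul,
    Matrix.mul_zero, Matrix.mul_one, add_zero, Matrix.add_mul, Matrix.mul_assoc]
  congr 1
  abel

end ControllerSynthesis

theorem theorem1_controller_synthesis_general
    (n m p q d : ℕ) (A : Matrix (Fin n) (Fin n) ℝ) (B : Matrix (Fin n) (Fin m) ℝ)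
    (C : Matrix (Fin p) (Fin n) ℝ) (Cz : Matrix (Fin q) (Fin n) ℝ)
    (D : Matrix (Fin n) (Fin d) ℝ)
    (W : Matrix (Fin d) (Fin d) ℝ) (V : Matrix (Fin p) (Fin p) ℝ)
    (Gw : Matrix (Fin m) (Fin m) ℝ) (Gv : Matrix (Fin p) (Fin p) ℝ)
    (hW : W.PosDef) (hV : V.PosDef) (hGw : Gw.PosDef) (hGv : Gv.PosDef)
    (Zbar : Matrix (Fin q) (Fin q) ℝ)
    (X Y : Matrix (Fin n) (Fin n) ℝ)
    (L : Matrix (Fin m) (Fin n) ℝ) (F : Matrix (Fin n) (Fin p) ℝ)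
    (Q : Matrix (Fin n) (Fin n) ℝ)
    -- LMI (10)
    (hLMI1 :
      (fromBlocks
        (fromBlocks
          (fromBlocks X 1 1 Y)
          (fromBlocks (A * X + B * L) A Q (Y * A + F * C))
          (fromBlocks (A * X + B * L) A Q (Y * A + F * C))ᵀ
          (fromBlocks X 1 1 Y))
        (fromBlocks (fromBlocks D B (Y * D) (Y * B)) (fromBlocks 0 0 F F) 0 0)
        (fromBlocks (fromBlocks D B (Y * D) (Y * B)) (fromBlocks 0 0 F F) 0 0)ᵀ
        (fromBlocks (fromBlocks W⁻¹ 0 0 Gw) 0 0 (fromBlocks V⁻¹ 0 0 Gv))).PosDef)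
    -- LMI (11)
    (hLMI2 :
      (fromBlocks Zbar (fromCols (Cz * X) Cz)
        (fromRows (X * Czᵀ) Czᵀ) (fromBlocks X 1 1 Y)).PosDef)
    -- controller reconstruction with S = Y, U = Y⁻¹ − X, D_c = 0
    (U : Matrix (Fin n) (Fin n) ℝ) (hU : U = Y⁻¹ - X)
    (Bc : Matrix (Fin n) (Fin p) ℝ) (hBc : Bc = Y⁻¹ * F)
    (Cc : Matrix (Fin m) (Fin n) ℝ) (hCc : Cc = L * U⁻¹)
    (Ac : Matrix (Fin n) (Fin n) ℝ)
    (hAc : Ac = Y⁻¹ * (Q - Y * A * X - F * C * X - Y * B * L) * U⁻¹) :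
    IsUnit Y ∧ IsUnit U ∧
    ∃ Xb : Matrix (Fin n ⊕ Fin n) (Fin n ⊕ Fin n) ℝ,
      Xb.PosDef ∧
      (Xb - (fromBlocks A (B * Cc) (Bc * C) Ac) * Xb * (fromBlocks A (B * Cc) (Bc * C) Ac)ᵀ
        - (fromBlocks (fromCols D B) 0 0 (fromCols Bc Bc) :
            Matrix (Fin n ⊕ Fin n) ((Fin d ⊕ Fin m) ⊕ (Fin p ⊕ Fin p)) ℝ)
          * (fromBlocks (fromBlocks W 0 0 Gw⁻¹) 0 0 (fromBlocks V 0 0 Gv⁻¹))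
          * (fromBlocks (fromCols D B) 0 0 (fromCols Bc Bc) :
            Matrix (Fin n ⊕ Fin n) ((Fin d ⊕ Fin m) ⊕ (Fin p ⊕ Fin p)) ℝ)ᵀ).PosDef ∧
      (Zbar - (fromCols Cz 0 : Matrix (Fin q) (Fin n ⊕ Fin n) ℝ) * Xb
        * (fromCols Cz 0 : Matrix (Fin q) (Fin n ⊕ Fin n) ℝ)ᵀ).PosDef := by
  simp only [← conjTranspose_eq_transpose_of_trivial] at hLMI1 hLMI2 ⊢
  have hR : (fromBlocks X 1 1 Y).PosDef := hLMI2.of_fromBlocks₂₂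
  have hY : Y.PosDef := hR.of_fromBlocks₂₂
  have hUu : IsUnit U := hU ▸ hR.isUnit_inv_sub
  obtain ⟨hYXU, hCcU, hYBc, hYAcU⟩ :=
    ControllerSynthesis.reconstruction_identities hY.isUnit hUu hU hBc hCc hAc
  have hP := ControllerSynthesis.transform_coupling hY.isHermitian.eq hYXU
  refine ⟨hY.isUnit, hUu, _, hR.mul_inv_mul_conjTranspose hP, ?lyapunov, ?performance⟩
  case lyapunov =>
    refine hR.lyapunov_of_congruence (isUnit_fromBlocks_zero₂₁.mpr ⟨isUnit_one, hY.isUnit⟩) hP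
      (ControllerSynthesis.transform_stateMatrix hY.isHermitian.eq hCcU hYBc hYAcU)
      (ControllerSynthesis.transform_inputMatrix hY.isHermitian.eq hYBc) ?_
    have hNoise : (fromBlocks (fromBlocks W⁻¹ 0 0 Gw) 0 0 (fromBlocks V⁻¹ 0 0 Gv))⁻¹
        = fromBlocks (fromBlocks W 0 0 Gw⁻¹) 0 0 (fromBlocks V 0 0 Gv⁻¹) := by
      simp [inv_fromBlocks_zero_zero, isUnit_fromBlocks_zero₂₁, hW.isUnit, hGw.isUnit, hV.isUnit,
        hGv.isUnit, nonsing_inv_nonsing_inv _ hW.det_pos.ne'.isUnit,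
        nonsing_inv_nonsing_inv _ hV.det_pos.ne'.isUnit]
    rw [← fromRows_fromCols_eq_fromBlocks (fromBlocks D B (Y * D) (Y * B)) (fromBlocks 0 0 F F),
      fromCols_zero] at hLMI1
    simpa only [hNoise] using hLMI1.schur₂₂_of_fromRows_zero
  case performance =>
    have hCP : (fromCols Cz 0 : Matrix (Fin q) (Fin n ⊕ Fin n) ℝ) * fromBlocks X 1 U 0
        = fromCols (Cz * X) Cz := by
      rw [fromCols_mul_fromBlocks]; simp
    have hN : (fromCols (Cz * X) Cz)ᴴ = fromRows (X * Czᴴ) Czᴴ := by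
      rw [conjTranspose_fromCols_eq_fromRows_conjTranspose, conjTranspose_mul,
        hR.of_fromBlocks₁₁.isHermitian.eq]
    rw [← hN, ← hCP] at hLMI2
    exact hLMI2.sub_mul_conj_of_fromBlocks

/-- Controller-synthesis content of Theorem 1: feasibility of the LMIs (10)–(11)
in the variables `(X, Y, Q, F, L, Γ_w, Γ_v)` yields, through the reconstruction
(16) with `S = Y`, `U = Y⁻¹ − X` and `D_c = 0`, a dynamic controller whose
closed loop admits a steady-state covariance bound `𝐗` satisfying the
performance constraint `𝐂𝐗𝐂ᵀ ≺ Z̄`; the privacy noise covariances are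
`Wᵖ = Γ_w⁻¹` and `Vᵖ = Γ_v⁻¹`. -/
theorem theorem1_controller_synthesis
    (n m p q d : ℕ) (hn : 0 < n) (hm : 0 < m) (hp : 0 < p) (hq : 0 < q) (hd : 0 < d)
    (A : Matrix (Fin n) (Fin n) ℝ) (B : Matrix (Fin n) (Fin m) ℝ)
    (C : Matrix (Fin p) (Fin n) ℝ) (Cz : Matrix (Fin q) (Fin n) ℝ)
    (D : Matrix (Fin n) (Fin d) ℝ)
    (W : Matrix (Fin d) (Fin d) ℝ) (V : Matrix (Fin p) (Fin p) ℝ)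
    (Gw : Matrix (Fin m) (Fin m) ℝ) (Gv : Matrix (Fin p) (Fin p) ℝ)
    (hW : W.PosDef) (hV : V.PosDef) (hGw : Gw.PosDef) (hGv : Gv.PosDef)
    (Zbar : Matrix (Fin q) (Fin q) ℝ) (hZbar : Zbar.IsHermitian)
    (X Y : Matrix (Fin n) (Fin n) ℝ) (hXsymm : X.IsHermitian) (hYsymm : Y.IsHermitian)
    (L : Matrix (Fin m) (Fin n) ℝ) (F : Matrix (Fin n) (Fin p) ℝ)
    (Q : Matrix (Fin n) (Fin n) ℝ)
    -- LMI (10)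
    (hLMI1 :
      (fromBlocks
        (fromBlocks
          (fromBlocks X 1 1 Y)
          (fromBlocks (A * X + B * L) A Q (Y * A + F * C))
          (fromBlocks (A * X + B * L) A Q (Y * A + F * C))ᵀ
          (fromBlocks X 1 1 Y))
        (fromBlocks (fromBlocks D B (Y * D) (Y * B)) (fromBlocks 0 0 F F) 0 0)
        (fromBlocks (fromBlocks D B (Y * D) (Y * B)) (fromBlocks 0 0 F F) 0 0)ᵀ
        (fromBlocks (fromBlocks W⁻¹ 0 0 Gw) 0 0 (fromBlocks V⁻¹ 0 0 Gv))).PosDef)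
    -- LMI (11)
    (hLMI2 :
      (fromBlocks Zbar (fromCols (Cz * X) Cz)
        (fromRows (X * Czᵀ) Czᵀ) (fromBlocks X 1 1 Y)).PosDef)
    -- controller reconstruction with S = Y, U = Y⁻¹ − X, D_c = 0
    (U : Matrix (Fin n) (Fin n) ℝ) (hU : U = Y⁻¹ - X)
    (Bc : Matrix (Fin n) (Fin p) ℝ) (hBc : Bc = Y⁻¹ * F)
    (Cc : Matrix (Fin m) (Fin n) ℝ) (hCc : Cc = L * U⁻¹)
    (Ac : Matrix (Fin n) (Fin n) ℝ)
    (hAc : Ac = Y⁻¹ * (Q - Y * A * X - F * C * X - Y * B * L) * U⁻¹) :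
    IsUnit Y ∧ IsUnit U ∧
    ∃ Xb : Matrix (Fin n ⊕ Fin n) (Fin n ⊕ Fin n) ℝ,
      Xb.PosDef ∧
      (Xb - (fromBlocks A (B * Cc) (Bc * C) Ac) * Xb * (fromBlocks A (B * Cc) (Bc * C) Ac)ᵀ
        - (fromBlocks (fromCols D B) 0 0 (fromCols Bc Bc) :
            Matrix (Fin n ⊕ Fin n) ((Fin d ⊕ Fin m) ⊕ (Fin p ⊕ Fin p)) ℝ)
          * (fromBlocks (fromBlocks W 0 0 Gw⁻¹) 0 0 (fromBlocks V 0 0 Gv⁻¹))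
          * (fromBlocks (fromCols D B) 0 0 (fromCols Bc Bc) :
            Matrix (Fin n ⊕ Fin n) ((Fin d ⊕ Fin m) ⊕ (Fin p ⊕ Fin p)) ℝ)ᵀ).PosDef ∧
      (Zbar - (fromCols Cz 0 : Matrix (Fin q) (Fin n ⊕ Fin n) ℝ) * Xb
        * (fromCols Cz 0 : Matrix (Fin q) (Fin n ⊕ Fin n) ℝ)ᵀ).PosDef :=
  theorem1_controller_synthesis_general n m p q d A B C Cz D W V Gw Gv hW hV hGw hGv Zbar X Y L F Q
    hLMI1 hLMI2 U hU Bc hBc Cc hCc Ac hAc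
end

section
/- Let n be a positive integer, F an n×n real matrix, Q a symmetric positive semidefinite n×n real matrix, and X a symmetric positive definite n×n real matrix such that X − F·X·Fᵀ − Q is positive definite. Let Σ : ℕ → (n×n real matrices) satisfy: Σ 0 is symmetric positive semidefinite with X − Σ 0 positive semidefinite, and Σ (k+1) = F·(Σ k)·Fᵀ + Q for all k. Then for every k ≥ 1, Σ k is symmetric positive semidefinite and X − Σ k is positive definite. -/
open Matrix

/-- Covariance propagation of `x_{k+1} = F x_k + w_k` with noise covariance `Q`:
under the strict Lyapunov-type inequality `F X Fᵀ + Q ≺ X` (condition (20) in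
the paper), `X` bounds the state covariance at every time step. -/
theorem covariance_propagation_bound
    (n : ℕ) (hn : 0 < n)
    (F Q X : Matrix (Fin n) (Fin n) ℝ)
    (hQ : Q.PosSemidef) (hX : X.PosDef)
    (hLyap : (X - F * X * Fᵀ - Q).PosDef)
    (Sig : ℕ → Matrix (Fin n) (Fin n) ℝ)
    (hSig0 : (Sig 0).PosSemidef) (hXSig0 : (X - Sig 0).PosSemidef)
    (hrec : ∀ k, Sig (k + 1) = F * Sig k * Fᵀ + Q) :
    ∀ k, 1 ≤ k → (Sig k).PosSemidef ∧ (X - Sig k).PosDef := by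
  have key : ∀ k, (Sig k).PosSemidef ∧ (X - Sig k).PosSemidef := by
    intro k
    induction k with
    | zero => exact ⟨hSig0, hXSig0⟩
    | succ m ih =>
      have hstep : (Sig (m + 1)).PosSemidef := by
        rw [hrec m]
        exact (ih.1.mul_mul_conjTranspose_same F).add hQ
      refine ⟨hstep, ?_⟩
      have hdiff : X - Sig (m + 1)
          = (X - F * X * Fᵀ - Q) + F * (X - Sig m) * Fᵀ := by
        rw [hrec m]
        noncomm_ring
      rw [hdiff]
      exact ((hLyap.add_posSemidef (ih.2.mul_mul_conjTranspose_same F))).posSemidef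
  intro k hk
  obtain ⟨m, rfl⟩ := Nat.exists_eq_add_of_le hk
  refine ⟨(key (1 + m)).1, ?_⟩
  have h1 : 1 + m = m + 1 := Nat.add_comm 1 m
  rw [h1]
  have hdiff : X - Sig (m + 1)
      = (X - F * X * Fᵀ - Q) + F * (X - Sig m) * Fᵀ := by
    rw [hrec m]; noncomm_ring
  rw [hdiff]
  exact hLyap.add_posSemidef ((key m).2.mul_mul_conjTranspose_same F)
end

section
/- Let n be a positive integer, A an n×n real matrix, Q a symmetric positive semidefinite n×n real matrix, and X a symmetric positive definite n×n real matrix such that X − A·X·Aᵀ − Q is positive definite. Then there exists a symmetric positive semidefinite n×n matrix Σ such that Σ = A·Σ·Aᵀ + Q and X − Σ is positive definite. -/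
/-!
From `Σ₀ = 0`, the iterates `Σₖ₊₁ = A Σₖ Aᵀ + Q` increase in the Loewner order and stay below `X`,
because `A X Aᵀ + Q ≤ X`. A monotone bounded sequence of real matrices converges: its quadratic
forms converge, and polarization recovers the entries. The limit `Σ` is a fixed point with
`0 ≤ Σ ≤ X`, and `X - Σ = (X - A X Aᵀ - Q) + A (X - Σ) Aᵀ` is positive definite.
-/

open Matrix Filter Topology Set
open scoped MatrixOrder ComplexOrder

theorem Monotone.exists_isFixedPt_mem_Icc {α : Type*} [PartialOrder α] [TopologicalSpace α]
    [OrderClosedTopology α]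
    (hconv : ∀ u : ℕ → α, Monotone u → BddAbove (range u) → ∃ c, Tendsto u atTop (𝓝 c))
    {f : α → α} (hf : Monotone f) (hfc : Continuous f) {a b : α} (hab : a ≤ b)
    (ha : a ≤ f a) (hb : f b ≤ b) : ∃ c ∈ Icc a b, Function.IsFixedPt f c := by
  have hbound (n : ℕ) : f^[n] a ≤ b :=
    (hf.iterate n hab).trans (hf.antitone_iterate_of_map_le hb n.zero_le)
  have hmono := hf.monotone_iterate_of_le_map ha
  obtain ⟨c, hc⟩ := hconv _ hmono ⟨b, forall_mem_range.2 hbound⟩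
  exact ⟨c, ⟨ge_of_tendsto' hc fun n => hmono n.zero_le, le_of_tendsto' hc hbound⟩,
    isFixedPt_of_tendsto_iterate hc hfc.continuousAt⟩

namespace Matrix

variable {ι : Type*} [Fintype ι]

theorem isClosed_setOf_nonneg {𝕜 : Type*} [RCLike 𝕜] : IsClosed {M : Matrix ι ι 𝕜 | 0 ≤ M} := by
  simp_rw [nonneg_iff_posSemidef, posSemidef_iff_dotProduct_mulVec, IsHermitian, ofPred_and,
    ofPred_forall]
  exact (isClosed_eq continuous_id.matrix_conjTranspose continuous_id).inter
    (isClosed_iInter fun x => isClosed_le continuous_const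
      (continuous_const.dotProduct (continuous_id.matrix_mulVec continuous_const)))

instance orderClosedTopology {𝕜 : Type*} [RCLike 𝕜] : OrderClosedTopology (Matrix ι ι 𝕜) :=
  ⟨isClosed_le_of_isClosed_nonneg isClosed_setOf_nonneg⟩

theorem dotProduct_mulVec_le_of_le {𝕜 : Type*} [RCLike 𝕜] {M N : Matrix ι ι 𝕜} (h : M ≤ N)
    (x : ι → 𝕜) : star x ⬝ᵥ M *ᵥ x ≤ star x ⬝ᵥ N *ᵥ x := by
  simpa [sub_mulVec, dotProduct_sub] using (le_iff.1 h).dotProduct_mulVec_nonneg x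

theorem IsHermitian.apply_eq_polarization [DecidableEq ι] {M : Matrix ι ι ℝ} (hM : M.IsHermitian)
    (i j : ι) :
    M i j = ((Pi.single i 1 + Pi.single j 1) ⬝ᵥ M *ᵥ (Pi.single i 1 + Pi.single j 1)
      - Pi.single i 1 ⬝ᵥ M *ᵥ Pi.single i 1 - Pi.single j 1 ⬝ᵥ M *ᵥ Pi.single j 1) / 2 := by
  have hji : M j i = M i j := hM.apply i j
  simp only [mulVec_add, dotProduct_add, add_dotProduct, mulVec_single_one, single_dotProduct,
    col_apply, one_mul, hji]
  ring

theorem exists_tendsto_of_isHermitian_of_tendsto_dotProduct_mulVec {β : Type*} {l : Filter β}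
    {S : β → Matrix ι ι ℝ} (hS : ∀ k, (S k).IsHermitian)
    (hq : ∀ x, ∃ c, Tendsto (fun k => x ⬝ᵥ S k *ᵥ x) l (𝓝 c)) : ∃ L, Tendsto S l (𝓝 L) := by
  classical
  choose q hq using hq
  refine ⟨of fun i j =>
      (q (Pi.single i 1 + Pi.single j 1) - q (Pi.single i 1) - q (Pi.single j 1)) / 2,
    tendsto_pi_nhds.2 fun i => tendsto_pi_nhds.2 fun j => ?_⟩
  simp_rw [fun k => (hS k).apply_eq_polarization i j]
  exact (((hq _).sub (hq _)).sub (hq _)).div_const 2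

theorem exists_tendsto_of_monotone_of_bddAbove {S : ℕ → Matrix ι ι ℝ} (hS : Monotone S)
    (hbdd : BddAbove (range S)) : ∃ L, Tendsto S atTop (𝓝 L) := by
  obtain ⟨B, hB⟩ := hbdd
  -- `S k - S 0` is positive semidefinite, hence symmetric, even when `S 0` is not.
  have hq (x : ι → ℝ) : ∃ c, Tendsto (fun k => x ⬝ᵥ (S k - S 0) *ᵥ x) atTop (𝓝 c) := by
    refine ⟨_, tendsto_atTop_ciSup (fun k m hkm => ?_) ⟨x ⬝ᵥ (B - S 0) *ᵥ x, ?_⟩⟩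
    · simpa using dotProduct_mulVec_le_of_le (sub_le_sub_right (hS hkm) _) x
    · rintro _ ⟨k, rfl⟩
      simpa using dotProduct_mulVec_le_of_le (sub_le_sub_right (hB (mem_range_self k)) _) x
  obtain ⟨L, hL⟩ := exists_tendsto_of_isHermitian_of_tendsto_dotProduct_mulVec
    (fun k => (le_iff.1 (hS k.zero_le)).isHermitian) hq
  exact ⟨L + S 0, by simpa using hL.add_const (S 0)⟩

end Matrix

theorem steady_state_covariance_exists_general
    (n : ℕ)
    (A Q X : Matrix (Fin n) (Fin n) ℝ)
    (hQ : Q.PosSemidef) (hX : X.PosDef)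
    (hLyap : (X - A * X * Aᵀ - Q).PosDef) :
    ∃ Sig : Matrix (Fin n) (Fin n) ℝ,
      Sig.PosSemidef ∧ Sig = A * Sig * Aᵀ + Q ∧ (X - Sig).PosDef := by
  set f : Matrix (Fin n) (Fin n) ℝ → Matrix (Fin n) (Fin n) ℝ := fun M => A * M * Aᵀ + Q
  have hA : Aᵀ = star A := (conjTranspose_eq_transpose_of_trivial A).symm
  have hf : Monotone f := fun M N h => by
    simpa only [f, hA, add_le_add_iff_right] using star_right_conjugate_le_conjugate h A
  have hf0 : 0 ≤ f 0 := by
    show 0 ≤ A * 0 * Aᵀ + Q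
    simpa using hQ.nonneg
  have hfX : f X ≤ X := by
    show (X - (A * X * Aᵀ + Q)).PosSemidef
    rw [sub_add_eq_sub_sub]
    exact hLyap.posSemidef
  obtain ⟨Sig, ⟨hSig0, hSigX⟩, hfix⟩ := hf.exists_isFixedPt_mem_Icc
    (fun _ => exists_tendsto_of_monotone_of_bddAbove) (by fun_prop) hX.posSemidef.nonneg hf0 hfX
  refine ⟨Sig, hSig0.posSemidef, hfix.symm, ?_⟩
  have hsplit : X - Sig = (X - A * X * Aᵀ - Q) + A * (X - Sig) * Aᵀ := by
    nth_rewrite 1 [← hfix]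
    simp only [f]
    noncomm_ring
  rw [hsplit, hA]
  exact hLyap.add_posSemidef ((le_iff.1 hSigX).mul_mul_conjTranspose_same A)

/-- Steady-state covariance existence claim in the proof of Theorem 1: if the
strict discrete Lyapunov inequality `A X Aᵀ + Q ≺ X` holds with `X ≻ 0`, then
the discrete Lyapunov equation `Sig = ASigAᵀ + Q` has a positive semidefinite
solution, dominated by `X`. -/
theorem steady_state_covariance_exists
    (n : ℕ) (hn : 0 < n)
    (A Q X : Matrix (Fin n) (Fin n) ℝ)
    (hQ : Q.PosSemidef) (hX : X.PosDef)
    (hLyap : (X - A * X * Aᵀ - Q).PosDef) :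
    ∃ Sig : Matrix (Fin n) (Fin n) ℝ,
      Sig.PosSemidef ∧ Sig = A * Sig * Aᵀ + Q ∧ (X - Sig).PosDef :=
  steady_state_covariance_exists_general n A Q X hQ hX hLyap
end
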